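/- arXiv:2507.09109 — 7 statements merged into one kernel-verified Lean document; each statement's English description precedes it below -/
import Mathlib

section
/- Let (B, A, e, i, l) be a cleft extension and q the left adjoint of i. If for every complete A-projective resolution Q• and every projective object P of B, both the complexes q(Q•) and Hom_A(Q•, i(P)) are acyclic, then q sends Gorenstein projective objects of A to Gorenstein projective objects of B. -/
open CategoryTheory Limits

universe v u

namespace CleftGP

noncomputable section

variable {C : Type*} [Category C] [Abelian C]

/-- The complex `Hom(P, Q)` is acyclic. -/
def HomAcyclic (P : CochainComplex C ℤ) (Q : C) : Prop :=
  ∀ (n : ℤ) (f : P.X n ⟶ Q), P.d (n - 1) n ≫ f = 0 →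
    ∃ g : P.X (n + 1) ⟶ Q, P.d n (n + 1) ≫ g = f

/-- A complete projective resolution: an acyclic complex of projectives which stays
acyclic after applying `Hom(-, Q)` for every projective `Q`. -/
structure CompleteProjRes (C : Type*) [Category C] [Abelian C] where
  cx : CochainComplex C ℤ
  proj : ∀ n : ℤ, Projective (cx.X n)
  exactAt : ∀ n : ℤ, cx.ExactAt n
  homAcyclic : ∀ Q : C, Projective Q → HomAcyclic cx Q

/-- Gorenstein projective objects: images of differentials of complete projective resolutions. -/
def IsGProj (X : C) : Prop :=
  ∃ P : CompleteProjRes C, Nonempty (X ≅ Limits.image (P.cx.d 0 1))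

/-- Iterates of an endofunctor. -/
def funPow (F : C ⥤ C) : ℕ → C ⥤ C
  | 0 => 𝟭 C
  | n + 1 => funPow F n ⋙ F

instance funPow_additive (F : C ⥤ C) [F.Additive] (n : ℕ) : (funPow F n).Additive := by
  induction n with
  | zero => exact inferInstanceAs (𝟭 C).Additive
  | succ n ih => haveI := ih; exact inferInstanceAs ((funPow F n ⋙ F).Additive)

/-- The image of the complex `P` under `F` is acyclic. -/
def MapAcyclic {B : Type*} [Category B] [Abelian B] (F : B ⥤ C) [F.Additive]
    (P : CochainComplex B ℤ) : Prop :=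
  ∀ n : ℤ, ((F.mapHomologicalComplex (ComplexShape.up ℤ)).obj P).ExactAt n

/-- Projective dimension at most `n`. -/
def pdLE : ℕ → C → Prop
  | 0, X => Projective X
  | n + 1, X => ∃ (P : C) (p : P ⟶ X), Projective P ∧ Epi p ∧ pdLE n (kernel p)

/-- Finite projective dimension. -/
def FinitePd (X : C) : Prop := ∃ n, pdLE n X

/-- A cleft extension of abelian categories. -/
structure CleftExt (B A : Type*) [Category B] [Category A] [Abelian B] [Abelian A] where
  i : B ⥤ A
  e : A ⥤ B
  l : B ⥤ A
  e_faithful : e.Faithful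
  e_preservesFiniteLimits : PreservesFiniteLimits e
  e_preservesFiniteColimits : PreservesFiniteColimits e
  adj : l ⊣ e
  ei : i ⋙ e ≅ 𝟭 B

variable {B A : Type*} [Category B] [Category A] [Abelian B] [Abelian A]

/-- The data of the endofunctor `F` with the split short exact sequence
`0 ⟶ F ⟶ e ∘ l ⟶ Id ⟶ 0` associated to a cleft extension, together with the
canonical retraction `ν'`. -/
structure FData (l : B ⥤ A) (e : A ⥤ B) (adj : l ⊣ e) where
  F : B ⥤ B
  ν : F ⟶ l ⋙ e
  ν' : l ⋙ e ⟶ F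
  ρ : l ⋙ e ⟶ 𝟭 B
  unit_split : ∀ Y : B, adj.unit.app Y ≫ ρ.app Y = 𝟙 Y
  w : ∀ Y : B, ν.app Y ≫ ρ.app Y = 0
  isKernel : ∀ Y : B, Nonempty (IsLimit (KernelFork.ofι (ν.app Y) (w Y)))
  retract : ∀ Y : B, ν.app Y ≫ ν'.app Y = 𝟙 (F.obj Y)
  proj_eq : ∀ Y : B, ν'.app Y ≫ ν.app Y = 𝟙 ((l ⋙ e).obj Y) - ρ.app Y ≫ adj.unit.app Y

/-- The natural map `η : F² ⟶ F` of a cleft extension. -/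
def FData.η {l : B ⥤ A} {e : A ⥤ B} {adj : l ⊣ e} (Fd : FData l e adj) (Y : B) :
    Fd.F.obj (Fd.F.obj Y) ⟶ Fd.F.obj Y :=
  Fd.ν.app (Fd.F.obj Y) ≫ (l ⋙ e).map (Fd.ν.app Y) ≫ e.map (adj.counit.app (l.obj Y)) ≫
    Fd.ν'.app Y

/-- The data of the endofunctor `G` with the exact sequence `0 ⟶ G ⟶ l ∘ e ⟶ Id ⟶ 0`
associated to a cleft extension. -/
structure GData (l : B ⥤ A) (e : A ⥤ B) (adj : l ⊣ e) where
  G : A ⥤ A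
  u : G ⟶ e ⋙ l
  w : ∀ X : A, u.app X ≫ adj.counit.app X = 0
  isKernel : ∀ X : A, Nonempty (IsLimit (KernelFork.ofι (u.app X) (w X)))
  counit_epi : ∀ X : A, Epi (adj.counit.app X)

end
end CleftGP

open CleftGP

section Aux

open CategoryTheory Limits

variable {C : Type*} [Category C] [Abelian C]

/-- If a short complex is exact, the image of `g` is a cokernel of `f`. -/
noncomputable def imageIsoCokernelOfExact (S : ShortComplex C) (hS : S.Exact) :
    Limits.image S.g ≅ cokernel S.f := by
  have w' : S.f ≫ factorThruImage S.g = 0 := by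
    rw [← cancel_mono (Limits.image.ι S.g)]
    simp [S.zero]
  have ex' : (ShortComplex.mk S.f (factorThruImage S.g) w').Exact := by
    rw [ShortComplex.exact_iff_kernel_ι_comp_cokernel_π_zero] at hS ⊢
    have hk : kernel.ι (factorThruImage S.g) ≫ S.g = 0 := by
      calc kernel.ι (factorThruImage S.g) ≫ S.g
          = (kernel.ι (factorThruImage S.g) ≫ factorThruImage S.g) ≫ Limits.image.ι S.g := by
            rw [Category.assoc, Limits.image.fac]
        _ = 0 := by rw [kernel.condition, zero_comp]
    have heq : (kernel.ι (factorThruImage S.g) : _ ⟶ S.X₂) =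
        kernel.lift S.g (kernel.ι (factorThruImage S.g)) hk ≫ kernel.ι S.g := by simp
    show kernel.ι (factorThruImage S.g) ≫ cokernel.π S.f = 0
    rw [heq, Category.assoc, hS, comp_zero]
  haveI : Epi (ShortComplex.mk S.f (factorThruImage S.g) w').g := by
    dsimp; infer_instance
  exact ex'.gIsCokernel.coconePointUniqueUpToIso (colimit.isColimit _)

/-- Exactness of the short complex `X (n-1) → X n → X (n+1)` of a cochain complex
which is exact at `n`. -/
lemma sc'_exact_of_exactAt (K : CochainComplex C ℤ) (n : ℤ) (h : K.ExactAt n) :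
    (K.sc' (n - 1) n (n + 1)).Exact := by
  rw [HomologicalComplex.exactAt_iff' K (n - 1) n (n + 1)
    (by simp [CochainComplex.prev]) (by simp [CochainComplex.next])] at h
  exact h

end Aux


/-- If, for every complete `A`-projective resolution `Q•` and every projective
`P` of `B`, both `q(Q•)` and `Hom_A(Q•, i(P))` are acyclic, then `q` sends Gorenstein
projective objects of `A` to Gorenstein projective objects of `B`. -/
theorem stmt_4 {B A : Type*} [Category B] [Category A] [Abelian B] [Abelian A]
    (C : CleftExt B A) (q : A ⥤ B) (adjq : q ⊣ C.i) [q.Additive]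
    (h1 : ∀ Q : CompleteProjRes A, MapAcyclic q Q.cx)
    (h2 : ∀ (Q : CompleteProjRes A) (P : B), Projective P → HomAcyclic Q.cx (C.i.obj P)) :
    ∀ X : A, IsGProj X → IsGProj (q.obj X) := by
  haveI := C.e_faithful
  haveI := C.e_preservesFiniteColimits
  haveI : (C.i ⋙ C.e).PreservesEpimorphisms :=
    Functor.preservesEpimorphisms.of_iso C.ei.symm
  haveI : C.i.PreservesEpimorphisms :=
    Functor.preservesEpimorphisms_of_preserves_of_reflects C.i C.e
  haveI : PreservesColimitsOfSize.{0, 0} q := adjq.leftAdjoint_preservesColimits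
  rintro X ⟨P, ⟨eX⟩⟩
  let Qc : CochainComplex B ℤ := (q.mapHomologicalComplex (ComplexShape.up ℤ)).obj P.cx
  have hd : ∀ i j : ℤ, Qc.d i j = q.map (P.cx.d i j) := fun i j => rfl
  refine ⟨⟨Qc, fun n => adjq.map_projective _ (P.proj n), h1 P, ?_⟩, ⟨?_⟩⟩
  · -- Hom-acyclicity
    intro Q hQ n f hf
    set f' : P.cx.X n ⟶ C.i.obj Q := adjq.homEquiv _ _ f with hf'
    have hcond : P.cx.d (n - 1) n ≫ f' = 0 := by
      apply (adjq.homEquiv _ _).symm.injective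
      rw [Adjunction.homEquiv_naturality_left_symm, hf']
      erw [Equiv.symm_apply_apply]
      rw [← hd (n - 1) n]
      erw [hf]
      simp [Adjunction.homEquiv_counit]
      rfl
    obtain ⟨g', hg'⟩ := h2 P Q hQ n f' hcond
    refine ⟨(adjq.homEquiv _ _).symm g', ?_⟩
    have := Adjunction.homEquiv_naturality_left_symm adjq (P.cx.d n (n + 1)) g'
    rw [hg', hf'] at this
    erw [Equiv.symm_apply_apply] at this
    exact this.symm
  · -- the image iso
    have e1 : Limits.image (P.cx.d 0 1) ≅ cokernel (P.cx.d (0 - 1) 0) :=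
      imageIsoCokernelOfExact (P.cx.sc' (0 - 1) 0 (0 + 1))
        (sc'_exact_of_exactAt P.cx 0 (P.exactAt 0))
    have e2 : Limits.image (Qc.d 0 1) ≅ cokernel (Qc.d (0 - 1) 0) :=
      imageIsoCokernelOfExact (Qc.sc' (0 - 1) 0 (0 + 1))
        (sc'_exact_of_exactAt Qc 0 (h1 P 0))
    calc q.obj X ≅ q.obj (Limits.image (P.cx.d 0 1)) := q.mapIso eX
      _ ≅ q.obj (cokernel (P.cx.d (0 - 1) 0)) := q.mapIso e1
      _ ≅ cokernel (q.map (P.cx.d (0 - 1) 0)) := PreservesCokernel.iso q _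
      _ ≅ Limits.image (Qc.d 0 1) := e2.symm
end

section
/- Let (B, A, e, i, l) be a cleft extension with endofunctors G on A and F on B given by the exact sequences 0 → G → l∘e → Id_A → 0 and 0 → F → e∘l → Id_B → 0. Then F^n ∘ e is naturally isomorphic to e ∘ G^n for all n ≥ 1; in particular F is nilpotent if and only if G is nilpotent. -/
open CategoryTheory Limits

universe v u

open CleftGP

namespace Stmt6Aux

noncomputable section

variable {B A : Type*} [Category B] [Category A] [Abelian B] [Abelian A]
variable (C : CleftExt B A) (Fd : FData C.l C.e C.adj) (Gd : GData C.l C.e C.adj)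

lemma e_additive : C.e.Additive := by
  haveI := C.e_preservesFiniteLimits
  haveI := preservesBinaryBiproducts_of_preservesBinaryProducts C.e
  exact Functor.additive_of_preservesBinaryBiproducts C.e

lemma e_pz : C.e.PreservesZeroMorphisms := by
  haveI := e_additive C
  infer_instance

lemma wκ (X : A) : C.e.map (Gd.u.app X) ≫ C.e.map (C.adj.counit.app X) = 0 := by
  haveI := e_pz C
  rw [← C.e.map_comp, Gd.w, C.e.map_zero]

/-- `e` applied to the kernel fork defining `G` is still a kernel fork. -/
def kerLim (X : A) :
    IsLimit (KernelFork.ofι (C.e.map (Gd.u.app X)) (wκ C Gd X)) := by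
  haveI := e_pz C
  haveI := C.e_preservesFiniteLimits
  exact KernelFork.mapIsLimit _ (Gd.isKernel X).some C.e

/-- The canonical retraction of `e (u X)`. -/
def kap' (X : A) : C.e.obj (C.l.obj (C.e.obj X)) ⟶ C.e.obj (Gd.G.obj X) :=
  (KernelFork.IsLimit.lift' (kerLim C Gd X)
    (𝟙 _ - C.e.map (C.adj.counit.app X) ≫ C.adj.unit.app (C.e.obj X))
    (by simp [Preadditive.sub_comp])).1

lemma kap'_comp (X : A) : kap' C Gd X ≫ C.e.map (Gd.u.app X) =
    𝟙 _ - C.e.map (C.adj.counit.app X) ≫ C.adj.unit.app (C.e.obj X) :=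
  (KernelFork.IsLimit.lift' (kerLim C Gd X) _ _).2

lemma κ_kap' (X : A) : C.e.map (Gd.u.app X) ≫ kap' C Gd X = 𝟙 _ := by
  apply Fork.IsLimit.hom_ext (kerLim C Gd X)
  simp [kap'_comp, Preadditive.comp_sub, reassoc_of% (wκ C Gd X)]

lemma unit_kap' (X : A) : C.adj.unit.app (C.e.obj X) ≫ kap' C Gd X = 0 := by
  apply Fork.IsLimit.hom_ext (kerLim C Gd X)
  simp [kap'_comp, Preadditive.comp_sub]

lemma ν_mono (Y : B) : Mono (Fd.ν.app Y) := by
  haveI : IsSplitMono (Fd.ν.app Y) := IsSplitMono.mk' ⟨Fd.ν'.app Y, Fd.retract Y⟩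
  infer_instance

lemma unit_ν' (Y : B) : C.adj.unit.app Y ≫ Fd.ν'.app Y = 0 := by
  haveI := ν_mono C Fd Y
  rw [← cancel_mono (Fd.ν.app Y), Category.assoc, Fd.proj_eq]
  simp [Preadditive.comp_sub, reassoc_of% (Fd.unit_split Y)]

/-- The base natural isomorphism `e ⋙ F ≅ G ⋙ e`. -/
def baseIso : C.e ⋙ Fd.F ≅ Gd.G ⋙ C.e := by
  refine NatIso.ofComponents (fun X =>
    { hom := Fd.ν.app (C.e.obj X) ≫ kap' C Gd X
      inv := C.e.map (Gd.u.app X) ≫ Fd.ν'.app (C.e.obj X)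
      hom_inv_id := ?_
      inv_hom_id := ?_ }) ?_
  · rw [Category.assoc, reassoc_of% (kap'_comp C Gd X)]
    simp [Preadditive.sub_comp, unit_ν' C Fd, Fd.retract]
  · rw [Category.assoc, reassoc_of% (Fd.proj_eq (C.e.obj X))]
    simp [Preadditive.sub_comp, unit_kap' C Gd, κ_kap' C Gd]
  · intro X X' f
    haveI := e_pz C
    haveI : Mono (C.e.map (Gd.u.app X')) := by
      haveI : IsSplitMono (C.e.map (Gd.u.app X')) :=
        IsSplitMono.mk' ⟨kap' C Gd X', κ_kap' C Gd X'⟩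
      infer_instance
    dsimp only [Functor.comp_obj, Functor.comp_map]
    rw [← cancel_mono (C.e.map (Gd.u.app X'))]
    have hu : C.e.map (Gd.G.map f) ≫ C.e.map (Gd.u.app X')
        = C.e.map (Gd.u.app X) ≫ C.e.map (C.l.map (C.e.map f)) := by
      rw [← C.e.map_comp, ← C.e.map_comp, Gd.u.naturality]
      rfl
    have hν : Fd.F.map (C.e.map f) ≫ Fd.ν.app (C.e.obj X')
        = Fd.ν.app (C.e.obj X) ≫ C.e.map (C.l.map (C.e.map f)) := by
      simpa using Fd.ν.naturality (C.e.map f)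
    have hc : C.e.map (C.l.map (C.e.map f)) ≫ C.e.map (C.adj.counit.app X')
        = C.e.map (C.adj.counit.app X) ≫ C.e.map f := by
      rw [← C.e.map_comp, ← C.e.map_comp]
      congr 1
      simpa using C.adj.counit.naturality f
    have hs : C.e.map f ≫ C.adj.unit.app (C.e.obj X')
        = C.adj.unit.app (C.e.obj X) ≫ C.e.map (C.l.map (C.e.map f)) := by
      simpa using (C.adj.unit.naturality (C.e.map f)).symm
    simp only [Category.assoc, kap'_comp, hu, reassoc_of% hν, hν,
      reassoc_of% (kap'_comp C Gd X), Preadditive.comp_sub, Preadditive.sub_comp,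
      Category.comp_id, Category.id_comp, reassoc_of% hc, hc, reassoc_of% hs, hs]
    congr 1
    · erw [Category.comp_id]
      exact hν
    · rw [← Category.assoc, hν, Category.assoc, reassoc_of% hc, hs]

/-- Faithful exact `e` reflects zero objects. -/
lemma isZero_of_e (Z : A) (h : IsZero (C.e.obj Z)) : IsZero Z := by
  haveI := e_pz C
  haveI := C.e_faithful
  rw [IsZero.iff_id_eq_zero] at h ⊢
  apply C.e.map_injective
  rw [C.e.map_id, C.e.map_zero, h]

lemma isZero_e (Z : A) (h : IsZero Z) : IsZero (C.e.obj Z) := by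
  haveI := e_pz C
  rw [IsZero.iff_id_eq_zero] at h ⊢
  rw [← C.e.map_id, h, C.e.map_zero]

/-- The iterated natural isomorphism `e ⋙ F^(n+1) ≅ G^(n+1) ⋙ e`. -/
def iterIso : ∀ n : ℕ, (C.e ⋙ funPow Fd.F (n + 1)) ≅ (funPow Gd.G (n + 1) ⋙ C.e)
  | 0 => baseIso C Fd Gd
  | n + 1 =>
    (Functor.associator _ _ _).symm ≪≫
      Functor.isoWhiskerRight (iterIso n) Fd.F ≪≫ Functor.associator _ _ _ ≪≫
      Functor.isoWhiskerLeft (funPow Gd.G (n + 1)) (baseIso C Fd Gd) ≪≫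
      (Functor.associator _ _ _).symm

end

end Stmt6Aux

open Stmt6Aux

/-- For the endofunctors `G` on `A` and `F` on `B` of a cleft extension,
`F^n ∘ e ≅ e ∘ G^n` for all `n ≥ 1`; in particular `F` is nilpotent iff `G` is nilpotent. -/
theorem stmt_6 {B A : Type*} [Category B] [Category A] [Abelian B] [Abelian A]
    (C : CleftExt B A) (Fd : FData C.l C.e C.adj) (Gd : GData C.l C.e C.adj) :
    (∀ n : ℕ, 1 ≤ n → Nonempty ((C.e ⋙ funPow Fd.F n) ≅ (funPow Gd.G n ⋙ C.e))) ∧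
      ((∃ s : ℕ, 1 ≤ s ∧ ∀ Y : B, IsZero ((funPow Fd.F s).obj Y)) ↔
        (∃ s : ℕ, 1 ≤ s ∧ ∀ X : A, IsZero ((funPow Gd.G s).obj X))) := by
  constructor
  · intro n hn
    obtain ⟨m, rfl⟩ : ∃ m, n = m + 1 := ⟨n - 1, by omega⟩
    exact ⟨iterIso C Fd Gd m⟩
  · constructor
    · rintro ⟨s, hs, hF⟩
      refine ⟨s, hs, fun X => ?_⟩
      obtain ⟨m, rfl⟩ : ∃ m, s = m + 1 := ⟨s - 1, by omega⟩
      exact isZero_of_e C _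
        ((hF (C.e.obj X)).of_iso ((iterIso C Fd Gd m).symm.app X))
    · rintro ⟨s, hs, hG⟩
      refine ⟨s, hs, fun Y => ?_⟩
      obtain ⟨m, rfl⟩ : ∃ m, s = m + 1 := ⟨s - 1, by omega⟩
      have h1 : IsZero ((C.e ⋙ funPow Fd.F (m + 1)).obj (C.i.obj Y)) :=
        (isZero_e C _ (hG (C.i.obj Y))).of_iso ((iterIso C Fd Gd m).app (C.i.obj Y))
      exact h1.of_iso ((funPow Fd.F (m + 1)).mapIso (C.ei.symm.app Y))
end

section
/- Let (B, A, e, i, l) be a cleft extension with endofunctors G on A and F on B. For every object X of A and every n ≥ 1 there is a short exact sequence 0 → G^n(X) → l F^{n-1} e(X) → G^{n-1}(X) → 0 in A. -/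
open CategoryTheory Limits

universe v u

open CleftGP

noncomputable section CleftProof

open CleftGP

variable {B A : Type*} [Category B] [Category A] [Abelian B] [Abelian A]

/-- The objectwise isomorphism `F(e Z) ≅ e(G Z)`. -/
def fegIso (C : CleftExt B A) (Fd : FData C.l C.e C.adj) (Gd : GData C.l C.e C.adj) (Z : A) :
    Fd.F.obj (C.e.obj Z) ≅ C.e.obj (Gd.G.obj Z) := by
  haveI := C.e_preservesFiniteLimits
  set s : C.e.obj Z ⟶ C.e.obj (C.l.obj (C.e.obj Z)) := C.adj.unit.app (C.e.obj Z) with hs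
  set p : C.e.obj (C.l.obj (C.e.obj Z)) ⟶ C.e.obj Z := Fd.ρ.app (C.e.obj Z) with hp
  set q : C.e.obj (C.l.obj (C.e.obj Z)) ⟶ C.e.obj Z := C.e.map (C.adj.counit.app Z) with hq
  set ιp : Fd.F.obj (C.e.obj Z) ⟶ C.e.obj (C.l.obj (C.e.obj Z)) := Fd.ν.app (C.e.obj Z) with hιp
  set νp' : C.e.obj (C.l.obj (C.e.obj Z)) ⟶ Fd.F.obj (C.e.obj Z) := Fd.ν'.app (C.e.obj Z) with hνp'
  set ιq : C.e.obj (Gd.G.obj Z) ⟶ C.e.obj (C.l.obj (C.e.obj Z)) := C.e.map (Gd.u.app Z) with hιq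
  have hsp : s ≫ p = 𝟙 _ := Fd.unit_split _
  have hsq : s ≫ q = 𝟙 _ := C.adj.right_triangle_components Z
  have hretr : ιp ≫ νp' = 𝟙 _ := Fd.retract _
  have hproj : νp' ≫ ιp = 𝟙 _ - p ≫ s := Fd.proj_eq _
  -- the mapped kernel fork for q
  have kq : IsLimit (KernelFork.ofι ιq
      (by rw [hιq, hq, ← C.e.map_comp, Gd.w, C.e.map_zero]) : KernelFork q) :=
    isLimitForkMapOfIsLimit' C.e (Gd.w Z) (Gd.isKernel Z).some
  have kp : IsLimit (KernelFork.ofι ιp (Fd.w _) : KernelFork p) := (Fd.isKernel _).some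
  haveI monop : Mono ιp := mono_of_isLimit_fork kp
  haveI monoq : Mono ιq := mono_of_isLimit_fork kq
  have hιqq : ιq ≫ q = 0 := by rw [hιq, hq, ← C.e.map_comp, Gd.w, C.e.map_zero]
  have hιpp : ιp ≫ p = 0 := Fd.w _
  -- lift of 𝟙 - q ≫ s through ιq
  obtain ⟨r, hr⟩ := KernelFork.IsLimit.lift' kq (𝟙 _ - q ≫ s)
    (by simp only [Preadditive.sub_comp, Category.id_comp, Category.assoc, hsq,
      Category.comp_id, sub_self])
  have hr : r ≫ ιq = 𝟙 _ - q ≫ s := hr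
  have hsν' : s ≫ νp' = 0 := by
    rw [← cancel_mono ιp, Category.assoc, hproj, zero_comp, Preadditive.comp_sub,
      Category.comp_id, ← Category.assoc, hsp, Category.id_comp, sub_self]
  have hsr : s ≫ r = 0 := by
    rw [← cancel_mono ιq, Category.assoc, hr, zero_comp, Preadditive.comp_sub,
      Category.comp_id, ← Category.assoc, hsq, Category.id_comp, sub_self]
  have hιqr : ιq ≫ r = 𝟙 _ := by
    rw [← cancel_mono ιq, Category.assoc, hr, Category.id_comp, Preadditive.comp_sub,
      Category.comp_id, ← Category.assoc, hιqq, zero_comp, sub_zero]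
  exact
    { hom := ιp ≫ r
      inv := ιq ≫ νp'
      hom_inv_id := by
        rw [Category.assoc, ← Category.assoc r, hr, Preadditive.sub_comp, Category.id_comp,
          Preadditive.comp_sub, hretr, Category.assoc q s νp', hsν', comp_zero, comp_zero,
          sub_zero]
      inv_hom_id := by
        rw [Category.assoc, ← Category.assoc νp', hproj, Preadditive.sub_comp, Category.id_comp,
          Preadditive.comp_sub, hιqr, Category.assoc p s r, hsr, comp_zero, comp_zero,
          sub_zero] }

/-- Iterated version: `F^m (e X) ≅ e (G^m X)`. -/
def fegPowIso (C : CleftExt B A) (Fd : FData C.l C.e C.adj) (Gd : GData C.l C.e C.adj) (X : A) :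
    ∀ m : ℕ, (funPow Fd.F m).obj (C.e.obj X) ≅ C.e.obj ((funPow Gd.G m).obj X)
  | 0 => Iso.refl _
  | m + 1 => Fd.F.mapIso (fegPowIso C Fd Gd X m) ≪≫ fegIso C Fd Gd ((funPow Gd.G m).obj X)

end CleftProof


/-- For every object `X` of `A` and every `n ≥ 1` there is a short exact
sequence `0 ⟶ G^n(X) ⟶ l F^{n-1} e(X) ⟶ G^{n-1}(X) ⟶ 0` in `A`. -/
theorem stmt_7 {B A : Type*} [Category B] [Category A] [Abelian B] [Abelian A]
    (C : CleftExt B A) (Fd : FData C.l C.e C.adj) (Gd : GData C.l C.e C.adj) :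
    ∀ (X : A) (n : ℕ), 1 ≤ n →
      ∃ (f : (funPow Gd.G n).obj X ⟶ C.l.obj ((funPow Fd.F (n - 1)).obj (C.e.obj X)))
        (g : C.l.obj ((funPow Fd.F (n - 1)).obj (C.e.obj X)) ⟶ (funPow Gd.G (n - 1)).obj X)
        (w : f ≫ g = 0), (ShortComplex.mk f g w).ShortExact := by
  intro X n hn
  obtain ⟨m, rfl⟩ : ∃ m, n = m + 1 := ⟨n - 1, (Nat.succ_pred_eq_of_pos hn).symm⟩
  set Y : A := (funPow Gd.G m).obj X with hY
  set φ : (funPow Fd.F m).obj (C.e.obj X) ≅ C.e.obj Y := fegPowIso C Fd Gd X m with hφ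
  refine ⟨Gd.u.app Y ≫ C.l.map φ.inv, C.l.map φ.hom ≫ C.adj.counit.app Y, ?_, ?_⟩
  · show (Gd.u.app Y ≫ C.l.map φ.inv) ≫ C.l.map φ.hom ≫ C.adj.counit.app Y = 0
    rw [Category.assoc, ← Category.assoc (C.l.map φ.inv), ← C.l.map_comp, φ.inv_hom_id,
      C.l.map_id, Category.id_comp, Gd.w]
  · have hS0 : (ShortComplex.mk (Gd.u.app Y) (C.adj.counit.app Y) (Gd.w Y)).ShortExact := by
      haveI : Mono (Gd.u.app Y) := mono_of_isLimit_fork (Gd.isKernel Y).some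
      haveI : Epi (C.adj.counit.app Y) := Gd.counit_epi Y
      exact
        { exact := ShortComplex.exact_of_f_is_kernel _ (Gd.isKernel Y).some
          mono_f := inferInstance
          epi_g := inferInstance }
    refine ShortComplex.shortExact_of_iso
      (S₁ := ShortComplex.mk (Gd.u.app Y) (C.adj.counit.app Y) (Gd.w Y))
      (ShortComplex.isoMk (Iso.refl _) (C.l.mapIso φ.symm) (Iso.refl _) ?_ ?_) hS0
    · simp only [Iso.refl_hom, Category.id_comp, Iso.symm_hom, Functor.mapIso_hom]
      exact Category.id_comp _
    · simp only [Iso.symm_hom, Functor.mapIso_hom, Iso.refl_hom, Category.comp_id,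
        ← Category.assoc, ← C.l.map_comp, φ.inv_hom_id, C.l.map_id]
      simp
end

section
/- Let F : B → B be a perfect functor and P• a complete B-projective resolution. Then the complex F(P•) is acyclic. -/
open CategoryTheory Limits

universe v u

open CleftGP

/-- A perfect endofunctor in the sense of Kostas: `L_i F^j(F(P)) = 0` for `i,j > 0` and
projective `P`; `L_i F^j = 0` whenever `i + j ≥ n + 1` for some fixed `n`; and `F(P)` has
finite projective dimension for every projective `P`. -/
def IsPerfect {B : Type*} [Category B] [Abelian B] [EnoughProjectives B]
    (F : B ⥤ B) [F.Additive] : Prop :=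
  (∀ i j : ℕ, 0 < i → 0 < j → ∀ P : B, Projective P →
      IsZero (((funPow F j).leftDerived i).obj (F.obj P))) ∧
    (∃ n : ℕ, ∀ i j : ℕ, 0 < i → 0 < j → n + 1 ≤ i + j → ∀ Y : B,
      IsZero (((funPow F j).leftDerived i).obj Y)) ∧
    (∀ P : B, Projective P → FinitePd (F.obj P))

section Stmt12Aux

open HomologicalComplex

variable {D : Type*} [Category D] [Abelian D]

private lemma d_congr (K : CochainComplex D ℤ) {a b a' b' : ℤ} (ha : a = a') (hb : b' = b) :
    K.d a b = eqToHom (congrArg K.X ha) ≫ K.d a' b' ≫ eqToHom (congrArg K.X hb) := by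
  subst ha; subst hb; simp

/-- The truncation `⋯ ⟶ P^{k-3} ⟶ P^{k-2} ⟶ P^{k-1}` of a cochain complex,
reindexed as a chain complex. -/
noncomputable def resCx (P : CochainComplex D ℤ) (k : ℤ) : ChainComplex D ℕ :=
  ChainComplex.of (fun q => P.X (k - 1 - q))
    (fun q => eqToHom (congrArg P.X (by push_cast; ring)) ≫ P.d (k - 2 - q) (k - 1 - q))
    (fun q => by
      rw [d_congr P (show k - 2 - (q : ℤ) = k - 1 - ((q + 1 : ℕ) : ℤ) by push_cast; ring)
        (rfl : k - 1 - (q : ℤ) = k - 1 - (q : ℤ))]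
      simp)

lemma resCx_X (P : CochainComplex D ℤ) (k : ℤ) (q : ℕ) :
    (resCx P k).X q = P.X (k - 1 - q) := rfl

lemma resCx_d (P : CochainComplex D ℤ) (k : ℤ) (q : ℕ) :
    (resCx P k).d (q + 1) q =
      eqToHom (congrArg P.X (by push_cast; ring)) ≫ P.d (k - 2 - q) (k - 1 - q) :=
  by unfold resCx; simp

lemma resCx_exactAt_succ (P : CochainComplex D ℤ) (k : ℤ) (hex : ∀ n, P.ExactAt n) (q : ℕ) :
    (resCx P k).ExactAt (q + 1) := by
  rw [HomologicalComplex.exactAt_iff' _ (q + 1 + 1) (q + 1) q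
    (by simp [ChainComplex.prev]) (by simp [ChainComplex.next_nat_succ])]
  have h := (HomologicalComplex.exactAt_iff' P (k - 2 - ((q + 1 : ℕ) : ℤ))
      (k - 1 - ((q + 1 : ℕ) : ℤ)) (k - 1 - (q : ℤ))
      (by rw [CochainComplex.prev]; ring)
      (by rw [CochainComplex.next]; push_cast; ring)).1 (hex _)
  refine ShortComplex.exact_of_iso ?_ h
  refine ShortComplex.isoMk (eqToIso (congrArg P.X (by push_cast; ring)))
    (Iso.refl _) (Iso.refl _) ?_ ?_
  · simp only [HomologicalComplex.shortComplexFunctor'_obj_f]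
    rw [resCx_d]
    simp
    erw [eqToIso.hom, eqToHom_trans_assoc, eqToHom_refl, Category.id_comp, Category.comp_id]
  · simp only [HomologicalComplex.shortComplexFunctor'_obj_g]
    rw [resCx_d, d_congr P (show k - 2 - (q : ℤ) = k - 1 - ((q + 1 : ℕ) : ℤ) by push_cast; ring)
      (rfl : k - 1 - (q : ℤ) = k - 1 - (q : ℤ))]
    simp
    exact (Category.id_comp _).trans (Category.comp_id _).symm

end Stmt12Aux

section Stmt12Aux2
open CategoryTheory Limits HomologicalComplex

variable {D : Type*} [Category D] [Abelian D]

/-- The `k`-th syzygy of an acyclic complex, as a cokernel. -/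
noncomputable abbrev resZ (P : CochainComplex D ℤ) (k : ℤ) : D :=
  cokernel ((resCx P k).d 1 0)

/-- The truncated complex as a projective resolution of the syzygy. -/
noncomputable def resRes (P : CochainComplex D ℤ) (k : ℤ)
    (hproj : ∀ n : ℤ, CategoryTheory.Projective (P.X n)) (hex : ∀ n, P.ExactAt n) :
    CategoryTheory.ProjectiveResolution (resZ P k) where
  complex := resCx P k
  projective q := hproj _
  π := (ChainComplex.toSingle₀Equiv _ _).symm ⟨cokernel.π _, cokernel.condition _⟩
  quasiIso := ⟨fun q => by
    cases q with
    | zero =>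
      rw [ChainComplex.quasiIsoAt₀_iff, ShortComplex.quasiIso_iff_of_zeros']
      · constructor
        · refine ShortComplex.exact_of_g_is_cokernel _ ?_
          refine IsColimit.ofIsoColimit (cokernelIsCokernel ((resCx P k).d 1 0))
            (Cofork.ext (Iso.refl _) ?_)
          dsimp
          exact (Category.comp_id _).trans (ChainComplex.toSingle₀Equiv_symm_apply_f_zero (cokernel.π ((resCx P k).d 1 0)) (cokernel.condition _)).symm
        · simp only [HomologicalComplex.shortComplexFunctor'_map_τ₂, ChainComplex.toSingle₀Equiv_symm_apply_f_zero]
          exact (inferInstance : Epi (cokernel.π ((resCx P k).d 1 0)))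
      all_goals rfl
    | succ q =>
      rw [quasiIsoAt_iff_exactAt']
      · exact resCx_exactAt_succ P k hex q
      · apply ChainComplex.exactAt_succ_single_obj⟩

lemma resRes_complex (P : CochainComplex D ℤ) (k : ℤ)
    (hproj : ∀ n : ℤ, CategoryTheory.Projective (P.X n)) (hex : ∀ n, P.ExactAt n) :
    (resRes P k hproj hex).complex = resCx P k := rfl

end Stmt12Aux2

private lemma stmt_12_aux {B : Type*} [Category B] (F : B ⥤ B) {A A' C C' : B} (g : A ⟶ C)
    (h1 : F.obj A' = F.obj A) (h2 : A' = A) (h3 : C = C') (h4 : F.obj C' = F.obj C) :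
    (eqToIso h1).hom ≫ F.map g = F.map (eqToHom h2 ≫ g ≫ eqToHom h3) ≫ (eqToIso h4).hom := by
  subst h2 h3
  simp

/-- If `F : B ⥤ B` is perfect and `P•` is a complete `B`-projective
resolution, then `F(P•)` is acyclic. -/
theorem stmt_12 {B : Type*} [Category B] [Abelian B] [EnoughProjectives B]
    (F : B ⥤ B) [F.Additive] (hperf : IsPerfect F) (P : CompleteProjRes B) :
    MapAcyclic F P.cx := by
  obtain ⟨-, ⟨m, hm⟩, -⟩ := hperf
  intro n
  have hz : IsZero ((F.leftDerived (m + 1)).obj (resZ P.cx (n + m + 2))) :=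
    hm (m + 1) 1 (Nat.succ_pos m) Nat.one_pos (by omega) _
  have h2 : IsZero
      (((F.mapHomologicalComplex (ComplexShape.down ℕ)).obj
        (resCx P.cx (n + m + 2))).homology (m + 1)) :=
    hz.of_iso ((resRes P.cx (n + m + 2) P.proj P.exactAt).isoLeftDerivedObj F (m + 1)).symm
  have h3 : ((F.mapHomologicalComplex (ComplexShape.down ℕ)).obj
      (resCx P.cx (n + m + 2))).ExactAt (m + 1) := by
    rw [HomologicalComplex.exactAt_iff_isZero_homology]
    exact h2
  have h4 := (HomologicalComplex.exactAt_iff' _ (m + 1 + 1) (m + 1) m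
    (ChainComplex.prev ℕ (m + 1)) (ChainComplex.next_nat_succ m)).1 h3
  rw [HomologicalComplex.exactAt_iff' _ (n - 1) n (n + 1)
    (CochainComplex.prev ℤ n) (CochainComplex.next ℤ n)]
  refine ShortComplex.exact_of_iso ?_ h4
  refine ShortComplex.isoMk
    (eqToIso (congrArg (fun t => F.obj (P.cx.X t)) (show n + (m : ℤ) + 2 - 1 - ((m + 2 : ℕ) : ℤ) = n - 1 by push_cast; ring)))
    (eqToIso (congrArg (fun t => F.obj (P.cx.X t)) (show n + (m : ℤ) + 2 - 1 - ((m + 1 : ℕ) : ℤ) = n by push_cast; ring)))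
    (eqToIso (congrArg (fun t => F.obj (P.cx.X t)) (show n + (m : ℤ) + 2 - 1 - ((m : ℕ) : ℤ) = n + 1 by push_cast; ring)))
    ?_ ?_
  · simp only [HomologicalComplex.shortComplexFunctor'_obj_f,
      HomologicalComplex.shortComplexFunctor_obj_f, Functor.mapHomologicalComplex_obj_d]
    rw [resCx_d, d_congr P.cx
      (show n + (m : ℤ) + 2 - 2 - ((m + 1 : ℕ) : ℤ) = n - 1 by push_cast; ring)
      (show (n : ℤ) = n + (m : ℤ) + 2 - 1 - ((m + 1 : ℕ) : ℤ) by push_cast; ring)]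
    simp [eqToHom_map]
    exact stmt_12_aux F _ _ _ _ _
  · simp only [HomologicalComplex.shortComplexFunctor'_obj_g,
      HomologicalComplex.shortComplexFunctor_obj_g, Functor.mapHomologicalComplex_obj_d]
    rw [resCx_d, d_congr P.cx
      (show n + (m : ℤ) + 2 - 2 - ((m : ℕ) : ℤ) = n by push_cast; ring)
      (show (n : ℤ) + 1 = n + (m : ℤ) + 2 - 1 - ((m : ℕ) : ℤ) by push_cast; ring)]
    simp [eqToHom_map]
    exact stmt_12_aux F _ _ _ _ _
end

section
/- Let (B, A, e, i, l) be a compatible cleft extension, X an object of A, and u_X : G(X) → le(X) the kernel of the counit λ_X : le(X) → X. If X is Gorenstein projective in A, then q(X) is Gorenstein projective in B and q(u_X) is a monomorphism. -/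
open CategoryTheory Limits

universe v u

open CleftGP

namespace CleftGP

section Aux

open CategoryTheory.Abelian

variable {D : Type*} [Category D] [Abelian D]

/-- If `S` is an exact short complex, `r` is an epi with `r ≫ ι = S.g` and `S.f ≫ r = 0`,
then `ι` is a mono. -/
lemma key_mono (S : ShortComplex D) (hS : S.Exact) {K : D}
    (r : S.X₂ ⟶ K) (ι : K ⟶ S.X₃) [Epi r] (hfac : r ≫ ι = S.g) (hd : S.f ≫ r = 0) :
    Mono ι := by
  apply Pseudoelement.mono_of_zero_of_map_zero
  intro a ha
  obtain ⟨b, hb⟩ := Pseudoelement.pseudo_surjective_of_epi r a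
  have hgb : Pseudoelement.pseudoApply S.g b = 0 := by
    rw [← hfac, Pseudoelement.comp_apply, hb, ha]
  obtain ⟨c, hc⟩ := Pseudoelement.pseudo_exact_of_exact hS b hgb
  rw [← hb, ← hc, ← Pseudoelement.comp_apply, hd, Pseudoelement.zero_apply]

/-- A left adjoint preserves epimorphisms. -/
lemma epi_qmap {B' A' : Type*} [Category B'] [Category A'] [Abelian B'] [Abelian A']
    {q : A' ⥤ B'} {i : B' ⥤ A'} (adjq : q ⊣ i) {X Y : A'} (f : X ⟶ Y) [Epi f] :
    Epi (q.map f) := by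
  constructor
  intro Z g h H
  have H2 := congrArg (adjq.homEquiv X Z) H
  rw [adjq.homEquiv_naturality_left, adjq.homEquiv_naturality_left] at H2
  exact (adjq.homEquiv Y Z).injective ((cancel_epi f).mp H2)

end Aux

end CleftGP


/-- In a compatible cleft extension, if `X` is Gorenstein projective in `A`
then `q(X)` is Gorenstein projective in `B` and `q(u_X)` is a monomorphism, where
`u_X : G(X) ⟶ le(X)` is the kernel of the counit `λ_X : le(X) ⟶ X`. -/
theorem stmt_13 {B A : Type*} [Category B] [Category A] [Abelian B] [Abelian A]
    (C : CleftExt B A) (Fd : FData C.l C.e C.adj) [Fd.F.Additive]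
    (Gd : GData C.l C.e C.adj) (q : A ⥤ B) (adjq : q ⊣ C.i) [q.Additive]
    (h1 : ∀ P : CompleteProjRes B, MapAcyclic Fd.F P.cx)
    (h2 : ∀ (P : CompleteProjRes B) (P' : B), Projective P' → HomAcyclic P.cx (Fd.F.obj P'))
    (h3 : ∀ Q : CompleteProjRes A, MapAcyclic q Q.cx)
    (h4 : ∀ (Q : CompleteProjRes A) (P : B), Projective P → HomAcyclic Q.cx (C.i.obj P))
    (X : A) (hX : IsGProj X) :
    IsGProj (q.obj X) ∧ Mono (q.map (Gd.u.app X)) := by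
  obtain ⟨Q, ⟨α⟩⟩ := hX
  haveI : C.e.Faithful := C.e_faithful
  -- `i` preserves epimorphisms
  haveI : C.i.PreservesEpimorphisms := by
    constructor
    intro Y Z f hf
    haveI := hf
    apply C.e.epi_of_epi_map
    have eq : C.e.map (C.i.map f) = C.ei.hom.app Y ≫ f ≫ C.ei.inv.app Z := by
      have h := C.ei.hom.naturality f
      simp only [Functor.comp_map, Functor.id_map] at h
      rw [← Category.assoc, ← h, Category.assoc, Iso.hom_inv_id_app, Category.comp_id]
    rw [eq]
    infer_instance
  haveI := adjq.leftAdjoint_preservesColimits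
  -- exactness of the image complex in `B`
  have hexact : ∀ a b c : ℤ, a + 1 = b → b + 1 = c →
      (ShortComplex.mk (q.map (Q.cx.d a b)) (q.map (Q.cx.d b c))
        (by rw [← q.map_comp, HomologicalComplex.d_comp_d, q.map_zero])).Exact := by
    intro a b c hab hbc
    have := (HomologicalComplex.exactAt_iff'
      ((q.mapHomologicalComplex (ComplexShape.up ℤ)).obj Q.cx) a b c
      (ComplexShape.prev_eq' _ (by simpa using hab))
      (ComplexShape.next_eq' _ (by simpa using hbc))).mp (h3 Q b)
    exact this
  -- `q` of the cycle inclusion at 0 is a mono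
  haveI mono_qm : Mono (q.map (image.ι (Q.cx.d 0 1))) := by
    haveI : Epi (q.map (factorThruImage (Q.cx.d 0 1))) := epi_qmap adjq _
    refine key_mono _ (hexact (-1) 0 1 (by ring) (by ring))
      (q.map (factorThruImage (Q.cx.d 0 1))) (q.map (image.ι (Q.cx.d 0 1))) ?_ ?_
    · show q.map (factorThruImage (Q.cx.d 0 1)) ≫ q.map (image.ι (Q.cx.d 0 1)) =
        q.map (Q.cx.d 0 1)
      rw [← q.map_comp, image.fac]
    · show q.map (Q.cx.d (-1) 0) ≫ q.map (factorThruImage (Q.cx.d 0 1)) = 0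
      have hA : Q.cx.d (-1) 0 ≫ factorThruImage (Q.cx.d 0 1) = 0 := by
        rw [← cancel_mono (image.ι (Q.cx.d 0 1)), Category.assoc, image.fac,
          HomologicalComplex.d_comp_d, zero_comp]
      rw [← q.map_comp, hA, q.map_zero]
  haveI : Epi (q.map (factorThruImage (Q.cx.d 0 1))) := epi_qmap adjq _
  haveI := strongEpi_of_epi (q.map (factorThruImage (Q.cx.d 0 1)))
  constructor
  · -- `q X` is Gorenstein projective
    refine ⟨⟨(q.mapHomologicalComplex (ComplexShape.up ℤ)).obj Q.cx,
      fun n => adjq.map_projective _ (Q.proj n), h3 Q, ?_⟩, ⟨?_⟩⟩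
    · -- Hom-acyclicity
      intro R hR n f hf
      have h0 : q.map (Q.cx.d (n - 1) n) ≫ f = 0 := hf
      have hcond : Q.cx.d (n - 1) n ≫ (adjq.homEquiv _ _) f = 0 := by
        calc Q.cx.d (n - 1) n ≫ (adjq.homEquiv _ _) f
            = (adjq.homEquiv _ _) (q.map (Q.cx.d (n - 1) n) ≫ f) :=
              (adjq.homEquiv_naturality_left _ _).symm
          _ = (adjq.homEquiv _ _) (q.map (0 : Q.cx.X (n - 1) ⟶ Q.cx.X n) ≫ f) := by
              rw [h0, q.map_zero]; exact congrArg _ zero_comp.symm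
          _ = (0 : Q.cx.X (n - 1) ⟶ Q.cx.X n) ≫ (adjq.homEquiv _ _) f :=
              adjq.homEquiv_naturality_left _ _
          _ = 0 := zero_comp
      obtain ⟨g', hg'⟩ := h4 Q R hR n ((adjq.homEquiv _ _) f) hcond
      refine ⟨(adjq.homEquiv _ _).symm g', ?_⟩
      show q.map (Q.cx.d n (n + 1)) ≫ (adjq.homEquiv _ _).symm g' = f
      calc q.map (Q.cx.d n (n + 1)) ≫ (adjq.homEquiv _ _).symm g'
          = (adjq.homEquiv _ _).symm (Q.cx.d n (n + 1) ≫ g') :=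
            (adjq.homEquiv_naturality_left_symm _ _).symm
        _ = (adjq.homEquiv _ _).symm ((adjq.homEquiv _ _) f) := by rw [hg']
        _ = (@id (q.obj (Q.cx.X n) ⟶ R) f) := Equiv.symm_apply_apply _ _
    · -- the isomorphism
      exact (q.mapIso α).trans (image.isoStrongEpiMono (f := q.map (Q.cx.d 0 1))
        (q.map (factorThruImage (Q.cx.d 0 1)))
        (q.map (image.ι (Q.cx.d 0 1))) (by rw [← q.map_comp, image.fac]))
  · -- `q (u_X)` is a mono
    have hπ0 : Epi (factorThruImage (Q.cx.d 0 1) ≫ α.inv) := epi_comp _ _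
    haveI : Epi (C.adj.counit.app X) := Gd.counit_epi X
    haveI := hπ0
    set lam : C.l.obj (C.e.obj X) ⟶ X := C.adj.counit.app X with hlam
    set π : Q.cx.X 0 ⟶ X := factorThruImage (Q.cx.d 0 1) ≫ α.inv with hπ
    -- the composite `kernel.ι (pullback.fst) ≫ pullback.snd` is a mono
    have mono_kpr2 : Mono (kernel.ι (pullback.fst lam π) ≫ pullback.snd lam π) := by
      refine ⟨fun {T} s t hst => ?_⟩
      have hk : s ≫ kernel.ι (pullback.fst lam π) = t ≫ kernel.ι (pullback.fst lam π) := by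
        apply pullback.hom_ext
        · simp only [Category.assoc, kernel.condition, comp_zero]
        · simpa [Category.assoc] using hst
      exact (cancel_mono (kernel.ι (pullback.fst lam π))).mp hk
    -- `kernel.ι (pullback.fst) ≫ pullback.snd` is a kernel of `Q.cx.d 0 1`
    have h2' : kernel.ι (pullback.fst lam π) ≫ pullback.snd lam π ≫ π = 0 := by
      rw [← pullback.condition, kernel.condition_assoc, zero_comp]
    have wk : (kernel.ι (pullback.fst lam π) ≫ pullback.snd lam π) ≫ Q.cx.d 0 1 = 0 := by
      have himg2 : Q.cx.d 0 1 = π ≫ α.hom ≫ image.ι (Q.cx.d 0 1) := by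
        rw [hπ, Category.assoc, Iso.inv_hom_id_assoc, image.fac]
      calc (kernel.ι (pullback.fst lam π) ≫ pullback.snd lam π) ≫ Q.cx.d 0 1
          = (kernel.ι (pullback.fst lam π) ≫ pullback.snd lam π) ≫ π ≫ α.hom ≫
            image.ι (Q.cx.d 0 1) := by rw [← himg2]
        _ = 0 := by
            simp only [Category.assoc]
            rw [reassoc_of% h2', zero_comp]
    have kfork : IsLimit (KernelFork.ofι _ wk) := by
      refine KernelFork.IsLimit.ofι _ _
        (fun {T} t ht => kernel.lift (pullback.fst lam π)
          (pullback.lift 0 t ?_) (pullback.lift_fst _ _ _)) ?_ ?_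
      · -- t ≫ π = 0
        have htp : t ≫ factorThruImage (Q.cx.d 0 1) = 0 := by
          rw [← cancel_mono (image.ι (Q.cx.d 0 1)), Category.assoc, image.fac, ht, zero_comp]
        rw [hπ, zero_comp, ← Category.assoc, htp, zero_comp]
      · intro T t ht
        rw [← Category.assoc, kernel.lift_ι, pullback.lift_snd]
      · intro T t ht m hm
        haveI := mono_kpr2
        apply (cancel_mono (kernel.ι (pullback.fst lam π) ≫ pullback.snd lam π)).mp
        rw [hm, ← Category.assoc, kernel.lift_ι, pullback.lift_snd]
    -- epi `r₀` from `Q.cx.X (-1)` onto this kernel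
    have hQ0 : (Q.cx.sc' (-1) 0 1).Exact :=
      (HomologicalComplex.exactAt_iff' Q.cx (-1) 0 1
        (ComplexShape.prev_eq' _ (by simp))
        (ComplexShape.next_eq' _ (by simp))).mp (Q.exactAt 0)
    haveI := hQ0.epi_toCycles
    set φ : (Q.cx.sc' (-1) 0 1).cycles ≅ kernel (pullback.fst lam π) := IsLimit.conePointUniqueUpToIso (Q.cx.sc' (-1) 0 1).cyclesIsKernel kfork with hφdef
    have hφ : φ.hom ≫ (kernel.ι (pullback.fst lam π) ≫ pullback.snd lam π) =
        (Q.cx.sc' (-1) 0 1).iCycles := by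
      have := IsLimit.conePointUniqueUpToIso_hom_comp
        (Q.cx.sc' (-1) 0 1).cyclesIsKernel kfork WalkingParallelPair.zero
      simp at this; exact this
    set r₀ : Q.cx.X (-1) ⟶ kernel (pullback.fst lam π) := (Q.cx.sc' (-1) 0 1).toCycles ≫ φ.hom with hr₀def
    have hr₀ : r₀ ≫ (kernel.ι (pullback.fst lam π) ≫ pullback.snd lam π) = Q.cx.d (-1) 0 := by
      rw [hr₀def]
      exact (Category.assoc _ _ _).trans ((congrArg (fun k => (Q.cx.sc' (-1) 0 1).toCycles ≫ k)
        hφ).trans (Q.cx.sc' (-1) 0 1).toCycles_i)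
    haveI : Epi r₀ := epi_comp' hQ0.epi_toCycles inferInstance
    have hd₀ : Q.cx.d (-2) (-1) ≫ r₀ = 0 := by
      rw [← cancel_mono (kernel.ι (pullback.fst lam π) ≫ pullback.snd lam π)]
      refine (Category.assoc _ _ _).trans ?_
      rw [hr₀, HomologicalComplex.d_comp_d, zero_comp]
    -- `q` of the kernel inclusion is mono
    haveI mono_kqpr2 : Mono (q.map (kernel.ι (pullback.fst lam π) ≫ pullback.snd lam π)) := by
      haveI : Epi (q.map r₀) := epi_qmap adjq _
      refine @key_mono _ _ _ _ (hexact (-2) (-1) 0 (by ring) (by ring)) _ (q.map r₀)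
        (q.map (kernel.ι (pullback.fst lam π) ≫ pullback.snd lam π)) this ?_ ?_
      · show q.map r₀ ≫ q.map (kernel.ι (pullback.fst lam π) ≫ pullback.snd lam π) =
          q.map (Q.cx.d (-1) 0)
        rw [← q.map_comp, hr₀]
      · show q.map (Q.cx.d (-2) (-1)) ≫ q.map r₀ = 0
        rw [← q.map_comp, hd₀, q.map_zero]
    -- `q` of `kernel.ι (pullback.snd)` is a (split) mono
    haveI mono_qj : Mono (q.map (kernel.ι (pullback.snd lam π))) := by
      haveI : Projective (Q.cx.X 0) := Q.proj 0
      have hs : Projective.factorThru (𝟙 (Q.cx.X 0)) (pullback.snd lam π) ≫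
          pullback.snd lam π = 𝟙 _ := Projective.factorThru_comp _ _
      have hρcond : (𝟙 (pullback lam π) -
          pullback.snd lam π ≫ Projective.factorThru (𝟙 (Q.cx.X 0)) (pullback.snd lam π)) ≫
          pullback.snd lam π = 0 := by
        rw [Preadditive.sub_comp, Category.id_comp, Category.assoc, hs, Category.comp_id,
          sub_self]
      have hjρ : kernel.ι (pullback.snd lam π) ≫ kernel.lift (pullback.snd lam π) _ hρcond =
          𝟙 (kernel (pullback.snd lam π)) := by
        rw [← cancel_mono (kernel.ι (pullback.snd lam π)), Category.assoc, kernel.lift_ι,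
          Preadditive.comp_sub, Category.comp_id, kernel.condition_assoc, zero_comp, sub_zero,
          Category.id_comp]
      haveI : Mono (q.map (kernel.ι (pullback.snd lam π)) ≫
          q.map (kernel.lift (pullback.snd lam π) _ hρcond)) := by
        rw [← q.map_comp, hjρ, q.map_id]
        infer_instance
      exact mono_of_mono _ (q.map (kernel.lift (pullback.snd lam π) _ hρcond))
    -- exactness of `q κ, q pr₁` in `B`
    have exact' : (ShortComplex.mk (q.map (kernel.ι (pullback.fst lam π)))
        (q.map (pullback.fst lam π))
        (by rw [← q.map_comp, kernel.condition, q.map_zero])).Exact := by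
      apply ShortComplex.exact_of_g_is_cokernel
      exact CokernelCofork.mapIsColimit _
        (Abelian.epiIsCokernelOfKernel _ (kernelIsKernel (pullback.fst lam π))) q
    -- the composite `kernel.ι (pullback.snd) ≫ pullback.fst` is mono after `q`
    have mono_final : Mono (q.map (kernel.ι (pullback.snd lam π) ≫ pullback.fst lam π)) := by
      rw [q.map_comp]
      apply Abelian.Pseudoelement.mono_of_zero_of_map_zero
      intro a ha
      rw [Abelian.Pseudoelement.comp_apply] at ha
      obtain ⟨b, hb⟩ := Abelian.Pseudoelement.pseudo_exact_of_exact exact' _ ha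
      have hb2 : Abelian.Pseudoelement.pseudoApply
          (q.map (kernel.ι (pullback.fst lam π) ≫ pullback.snd lam π)) b = 0 := by
        rw [q.map_comp, Abelian.Pseudoelement.comp_apply, hb,
          ← Abelian.Pseudoelement.comp_apply, ← q.map_comp, kernel.condition, q.map_zero,
          Abelian.Pseudoelement.zero_apply]
      have hb0 : b = 0 :=
        Abelian.Pseudoelement.zero_of_map_zero _
          (Abelian.Pseudoelement.pseudo_injective_of_mono _) b hb2
      rw [hb0, Abelian.Pseudoelement.apply_zero] at hb
      exact Abelian.Pseudoelement.zero_of_map_zero _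
        (Abelian.Pseudoelement.pseudo_injective_of_mono _) a hb.symm
    -- `kernel.ι (pullback.snd) ≫ pullback.fst` is mono in `A`
    have mono_jfst : Mono (kernel.ι (pullback.snd lam π) ≫ pullback.fst lam π) := by
      refine ⟨fun {T} s t hst => ?_⟩
      have hk : s ≫ kernel.ι (pullback.snd lam π) = t ≫ kernel.ι (pullback.snd lam π) := by
        apply pullback.hom_ext
        · simpa [Category.assoc] using hst
        · simp only [Category.assoc, kernel.condition, comp_zero]
      exact (cancel_mono (kernel.ι (pullback.snd lam π))).mp hk
    -- it is a kernel of the counit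
    have wfork : (kernel.ι (pullback.snd lam π) ≫ pullback.fst lam π) ≫ lam = 0 := by
      rw [Category.assoc, pullback.condition, kernel.condition_assoc, zero_comp]
    have ufork : IsLimit (KernelFork.ofι _ wfork) := by
      refine KernelFork.IsLimit.ofι _ _
        (fun {T} t ht => kernel.lift (pullback.snd lam π)
          (pullback.lift t 0 (by rw [ht, zero_comp])) (pullback.lift_snd _ _ _)) ?_ ?_
      · intro T t ht
        rw [← Category.assoc, kernel.lift_ι, pullback.lift_fst]
      · intro T t ht m hm
        haveI := mono_jfst
        apply (cancel_mono (kernel.ι (pullback.snd lam π) ≫ pullback.fst lam π)).mp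
        rw [hm, ← Category.assoc, kernel.lift_ι, pullback.lift_fst]
    obtain ⟨hu⟩ := Gd.isKernel X
    have hw : (IsLimit.conePointUniqueUpToIso hu ufork).hom ≫
        (kernel.ι (pullback.snd lam π) ≫ pullback.fst lam π) = Gd.u.app X := by
      exact IsLimit.conePointUniqueUpToIso_hom_comp hu ufork WalkingParallelPair.zero
    have hqu : q.map (Gd.u.app X) = q.map (IsLimit.conePointUniqueUpToIso hu ufork).hom ≫
        q.map (kernel.ι (pullback.snd lam π) ≫ pullback.fst lam π) := by
      rw [← q.map_comp, hw]
    rw [hqu]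
    haveI := mono_final
    exact mono_comp _ _
end

section
/- Let (B, A, e, i, l) be a cleft extension and X an object of A. Consider the complex F²e(X) → Fe(X) → e(X) obtained by applying q to the exact sequence le G(X) → le(X) → X → 0 (using eG ≅ Fe and ql ≅ Id). Then q(u_X) : qG(X) → e(X) is a monomorphism if and only if the sequence F²e(X) → Fe(X) → e(X) is exact at Fe(X). -/
open CategoryTheory Limits

universe v u

open CleftGP

/-- `q(u_X) : qG(X) ⟶ e(X)` is a monomorphism if and only if the sequence
`F²e(X) ⟶ Fe(X) ⟶ e(X)` is exact at `Fe(X)`. Here `α : F²e(X) ⟶ Fe(X)` and the epimorphism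
`π = q(λ_{G(X)}) : Fe(X) ⟶ qG(X)` (whose kernel is `Im α`, i.e. `(α, π)` is exact) are the
induced maps, `β_X = π ≫ q(u_X)` composed with the canonical isomorphism `qle(X) ≅ e(X)`. -/
theorem stmt_14 {B A : Type*} [Category B] [Category A] [Abelian B] [Abelian A]
    (C : CleftExt B A) (Fd : FData C.l C.e C.adj) (Gd : GData C.l C.e C.adj)
    (q : A ⥤ B) (adjq : q ⊣ C.i) (X : A)
    (α : Fd.F.obj (Fd.F.obj (C.e.obj X)) ⟶ Fd.F.obj (C.e.obj X))
    (π : Fd.F.obj (C.e.obj X) ⟶ q.obj (Gd.G.obj X)) [Epi π]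
    (iso : q.obj (C.l.obj (C.e.obj X)) ≅ C.e.obj X)
    (hw : α ≫ π = 0)
    (hexact : (ShortComplex.mk α π hw).Exact) :
    Mono (q.map (Gd.u.app X)) ↔
      (ShortComplex.mk α (π ≫ q.map (Gd.u.app X) ≫ iso.hom)
        (by rw [reassoc_of% hw, zero_comp])).Exact := by
  constructor
  · intro hf
    have hm : Mono (q.map (Gd.u.app X) ≫ iso.hom) := mono_comp _ _
    let φ : ShortComplex.mk α π hw ⟶
        ShortComplex.mk α (π ≫ q.map (Gd.u.app X) ≫ iso.hom)
          (by rw [reassoc_of% hw, zero_comp]) :=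
      { τ₁ := 𝟙 _
        τ₂ := 𝟙 _
        τ₃ := q.map (Gd.u.app X) ≫ iso.hom
        comm₁₂ := by simp
        comm₂₃ := by simp }
    haveI : Epi φ.τ₁ := by dsimp [φ]; infer_instance
    haveI : IsIso φ.τ₂ := by dsimp [φ]; infer_instance
    haveI : Mono φ.τ₃ := hm
    exact (ShortComplex.exact_iff_of_epi_of_isIso_of_mono φ).1 hexact
  · intro h2
    apply CategoryTheory.Abelian.Pseudoelement.mono_of_zero_of_map_zero
    intro a ha
    obtain ⟨b, hb⟩ := CategoryTheory.Abelian.Pseudoelement.pseudo_surjective_of_epi π a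
    open CategoryTheory.Abelian.Pseudoelement in
    have hz : Abelian.Pseudoelement.pseudoApply (π ≫ q.map (Gd.u.app X) ≫ iso.hom) b = 0 := by
      rw [CategoryTheory.Abelian.Pseudoelement.comp_apply,
        CategoryTheory.Abelian.Pseudoelement.comp_apply, hb, ha,
        CategoryTheory.Abelian.Pseudoelement.apply_zero]
    obtain ⟨c, hc⟩ := CategoryTheory.Abelian.Pseudoelement.pseudo_exact_of_exact h2 b hz
    have hc' : Abelian.Pseudoelement.pseudoApply α c = b := hc
    rw [← hb, ← hc', ← CategoryTheory.Abelian.Pseudoelement.comp_apply, hw,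
      CategoryTheory.Abelian.Pseudoelement.zero_apply]
end

section
/- Let T = R ⋉_θ M be a θ-extension of a ring R by an R-bimodule M, inducing the cleft extension (Mod R, Mod T, e, i, l) with l = T⊗_R−, e = restriction along R → T, i = restriction along T → R, q = R⊗_T−. If this cleft extension is compatible, then both T⊗_R− and R⊗_T− preserve Gorenstein projective modules. -/
open CategoryTheory Limits

universe v u

open CleftGP

/-- `X` belongs to `Add N`: it is a direct summand of a coproduct of copies of `N`. -/
def InAdd {C : Type (u + 1)} [Category.{u} C] (N X : C) : Prop :=
  ∃ (ι : Type u) (c : Cofan fun _ : ι => N) (_ : IsColimit c) (s : X ⟶ c.pt) (r : c.pt ⟶ X),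
    s ≫ r = 𝟙 X

/-- `T`, together with `φ : R →+* T` and `μ : M →+ T`, is the θ-extension `R ⋉_θ M`:
multiplicatively, `μ m * μ m' = μ (θ m m')`, `μ` is a bimodule map relative to `φ`, and
additively `T = R ⊕ M` via `(r, m) ↦ φ r + μ m`. -/
structure IsThetaExt (R M : Type u) [Ring R] [AddCommGroup M] [Module R M] [Module Rᵐᵒᵖ M]
    (θ : M → M → M) (T : Type u) [Ring T] (φ : R →+* T) (μ : M →+ T) : Prop where
  smul_left : ∀ (r : R) (m : M), μ (r • m) = φ r * μ m
  smul_right : ∀ (r : R) (m : M), μ (MulOpposite.op r • m) = μ m * φ r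
  mul_mul : ∀ m m' : M, μ m * μ m' = μ (θ m m')
  bijective : Function.Bijective fun p : R × M => φ p.1 + μ p.2


namespace CleftGPAux

open CleftGP

noncomputable section

variable {C : Type*} [Category C] [Abelian C]

theorem homAcyclic_of_retract (P : CochainComplex C ℤ) {X Y : C} (s : X ⟶ Y) (r : Y ⟶ X)
    (hsr : s ≫ r = 𝟙 X) (h : HomAcyclic P Y) : HomAcyclic P X := by
  intro n f hf
  obtain ⟨g, hg⟩ := h n (f ≫ s) (by rw [← Category.assoc, hf, zero_comp])
  exact ⟨g ≫ r, by rw [← Category.assoc, hg, Category.assoc, hsr, Category.comp_id]⟩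

theorem homAcyclic_biprod (P : CochainComplex C ℤ) {X Y : C}
    (hX : HomAcyclic P X) (hY : HomAcyclic P Y) : HomAcyclic P (X ⊞ Y) := by
  intro n f hf
  obtain ⟨g1, hg1⟩ := hX n (f ≫ biprod.fst) (by rw [← Category.assoc, hf, zero_comp])
  obtain ⟨g2, hg2⟩ := hY n (f ≫ biprod.snd) (by rw [← Category.assoc, hf, zero_comp])
  refine ⟨biprod.lift g1 g2, ?_⟩
  apply biprod.hom_ext <;> simp [hg1, hg2]

/-- transfer `HomAcyclic` through an adjunction. -/
theorem homAcyclic_of_adj {B A : Type*} [Category B] [Category A] [Abelian B] [Abelian A]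
    {L : B ⥤ A} {E : A ⥤ B} (adj : L ⊣ E) [L.Additive]
    (P : CochainComplex B ℤ) (Q : A) (h : HomAcyclic P (E.obj Q)) :
    HomAcyclic ((L.mapHomologicalComplex (ComplexShape.up ℤ)).obj P) Q := by
  intro n (f : L.obj (P.X n) ⟶ Q) hf
  rw [Functor.mapHomologicalComplex_obj_d] at hf
  haveI := adj.isRightAdjoint
  have hf' : L.map (P.d (n - 1) n) ≫ f = 0 := hf
  obtain ⟨g, hg⟩ := h n (adj.homEquiv _ _ f) (by
    rw [← Adjunction.homEquiv_naturality_left, hf']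
    simp [Adjunction.homEquiv_apply])
  refine ⟨(adj.homEquiv _ _).symm g, ?_⟩
  show L.map (P.d n (n + 1)) ≫ (adj.homEquiv _ _).symm g = f
  rw [← Adjunction.homEquiv_naturality_left_symm, hg,
    Equiv.symm_apply_apply]

theorem exactAt_iff_elem {A : Type u} [Ring A] (K : CochainComplex (ModuleCat.{u} A) ℤ) (n : ℤ) :
    K.ExactAt n ↔ ∀ x : K.X n, K.d n (n + 1) x = 0 → ∃ y : K.X (n - 1), K.d (n - 1) n y = x := by
  rw [HomologicalComplex.exactAt_iff' K (n - 1) n (n + 1)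
    (by rw [CochainComplex.prev]) (by rw [CochainComplex.next])]
  rw [ShortComplex.moduleCat_exact_iff]
  exact ⟨fun h x hx => h x hx, fun h x hx => h x hx⟩

/-- In `ModuleCat`, exactness gives `image g ≅ cokernel f`. -/
def imageIsoCokernelOfExact {A : Type u} [Ring A] {X Y Z : ModuleCat.{u} A}
    (f : X ⟶ Y) (g : Y ⟶ Z) (w : f ≫ g = 0) (h : (ShortComplex.mk f g w).Exact) :
    image g ≅ cokernel f := by
  have hrk : LinearMap.range f.hom = LinearMap.ker g.hom :=
    (ShortComplex.moduleCat_exact_iff_range_eq_ker (ShortComplex.mk f g w)).mp h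
  refine ModuleCat.imageIsoRange g ≪≫ ?_ ≪≫ (ModuleCat.cokernelIsoRangeQuotient f).symm
  exact ((LinearMap.quotKerEquivRange g.hom).symm.trans
    (Submodule.quotEquivOfEq _ _ hrk.symm)).toModuleIso

theorem isGProj_map_of {A₁ A₂ : Type u} [Ring A₁] [Ring A₂]
    (L : ModuleCat.{u} A₁ ⥤ ModuleCat.{u} A₂) [L.Additive] [PreservesColimitsOfSize.{0,0} L]
    (P : CompleteProjRes (ModuleCat.{u} A₁))
    (hex : ∀ n, ((L.mapHomologicalComplex (ComplexShape.up ℤ)).obj P.cx).ExactAt n)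
    (hproj : ∀ n : ℤ, Projective (((L.mapHomologicalComplex (ComplexShape.up ℤ)).obj P.cx).X n))
    (hhom : ∀ Q, Projective Q →
      HomAcyclic ((L.mapHomologicalComplex (ComplexShape.up ℤ)).obj P.cx) Q)
    (X : ModuleCat.{u} A₁) (hX : X ≅ image (P.cx.d 0 1)) : IsGProj (L.obj X) := by
  set K := (L.mapHomologicalComplex (ComplexShape.up ℤ)).obj P.cx with hK
  refine ⟨⟨K, hproj, hex, hhom⟩, ⟨?_⟩⟩
  have e1 : image (P.cx.d 0 1) ≅ cokernel (P.cx.d (-1) 0) :=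
    imageIsoCokernelOfExact _ _ (P.cx.d_comp_d (-1) 0 1)
      ((HomologicalComplex.exactAt_iff' P.cx (-1) 0 1
        (by rw [CochainComplex.prev]; norm_num) (by rw [CochainComplex.next]; norm_num)).mp (P.exactAt 0))
  have e2 : image (K.d 0 1) ≅ cokernel (K.d (-1) 0) :=
    imageIsoCokernelOfExact _ _ (K.d_comp_d (-1) 0 1)
      ((HomologicalComplex.exactAt_iff' K (-1) 0 1
        (by rw [CochainComplex.prev]; norm_num) (by rw [CochainComplex.next]; norm_num)).mp (hex 0))
  have e3 : cokernel (L.map (P.cx.d (-1) 0)) = cokernel (K.d (-1) 0) := rfl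
  exact L.mapIso hX ≪≫ L.mapIso e1 ≪≫ PreservesCokernel.iso L _ ≪≫ eqToIso e3 ≪≫ e2.symm

theorem mc_sub_apply {A : Type u} [Ring A] {X Y : ModuleCat.{u} A} (f g : X ⟶ Y) (x : X) :
    (f - g) x = f x - g x := rfl

theorem mc_zero_apply {A : Type u} [Ring A] {X Y : ModuleCat.{u} A} (x : X) :
    (0 : X ⟶ Y) x = 0 := rfl

theorem lmap_exactAt {R T : Type u} [Ring R] [Ring T] (φ : R →+* T)
    (l : ModuleCat.{u} R ⥤ ModuleCat.{u} T) [l.Additive]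
    (adjl : l ⊣ ModuleCat.restrictScalars φ)
    (Fd : FData l (ModuleCat.restrictScalars φ) adjl) [Fd.F.Additive]
    (P : CompleteProjRes (ModuleCat.{u} R))
    (h1 : ∀ n : ℤ, ((Fd.F.mapHomologicalComplex (ComplexShape.up ℤ)).obj P.cx).ExactAt n)
    (n : ℤ) : ((l.mapHomologicalComplex (ComplexShape.up ℤ)).obj P.cx).ExactAt n := by
  classical
  rw [exactAt_iff_elem]
  intro x hx
  let x' : ((l ⋙ ModuleCat.restrictScalars φ).obj (P.cx.X n) : Type u) := x
  have hx' : (l ⋙ ModuleCat.restrictScalars φ).map (P.cx.d n (n + 1)) x' = 0 := hx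
  have h1' : P.cx.d n (n + 1) (Fd.ρ.app (P.cx.X n) x') = 0 := by
    have h2 := ConcreteCategory.congr_hom (Fd.ρ.naturality (P.cx.d n (n + 1))) x'
    simp only [Functor.id_map, ModuleCat.comp_apply, Function.comp_apply] at h2
    rw [hx', map_zero] at h2
    exact h2.symm
  obtain ⟨y, hy⟩ := (exactAt_iff_elem P.cx n).mp (P.exactAt n) _ h1'
  let z : ((l ⋙ ModuleCat.restrictScalars φ).obj (P.cx.X (n - 1)) : Type u) :=
    adjl.unit.app (P.cx.X (n - 1)) y
  let x'' : ((l ⋙ ModuleCat.restrictScalars φ).obj (P.cx.X n) : Type u) :=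
    x' - (l ⋙ ModuleCat.restrictScalars φ).map (P.cx.d (n - 1) n) z
  have hdd : (l ⋙ ModuleCat.restrictScalars φ).map (P.cx.d n (n + 1))
      ((l ⋙ ModuleCat.restrictScalars φ).map (P.cx.d (n - 1) n) z) = 0 := by
    have hdd0 : (l ⋙ ModuleCat.restrictScalars φ).map (P.cx.d (n - 1) n) ≫
        (l ⋙ ModuleCat.restrictScalars φ).map (P.cx.d n (n + 1)) = 0 := by
      rw [← Functor.map_comp, P.cx.d_comp_d, Functor.map_zero]
    have h2 := ConcreteCategory.congr_hom hdd0 z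
    simp only [ModuleCat.comp_apply, Function.comp_apply] at h2
    exact h2.trans (mc_zero_apply z)
  have hA : (l ⋙ ModuleCat.restrictScalars φ).map (P.cx.d n (n + 1)) x'' = 0 := by
    have := (map_sub (ConcreteCategory.hom ((l ⋙ ModuleCat.restrictScalars φ).map (P.cx.d n (n + 1)))) x'
      ((l ⋙ ModuleCat.restrictScalars φ).map (P.cx.d (n - 1) n) z))
    rw [hx', hdd, sub_zero] at this
    exact this
  have hrz : Fd.ρ.app (P.cx.X (n - 1)) z = y := by
    have h2 := ConcreteCategory.congr_hom (Fd.unit_split (P.cx.X (n - 1))) y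
    simpa using h2
  have hB : Fd.ρ.app (P.cx.X n) x'' = 0 := by
    have h2 := ConcreteCategory.congr_hom (Fd.ρ.naturality (P.cx.d (n - 1) n)) z
    simp only [Functor.id_map, ModuleCat.comp_apply, Function.comp_apply] at h2
    have e1 : Fd.ρ.app (P.cx.X n) x'' = Fd.ρ.app (P.cx.X n) x' -
        Fd.ρ.app (P.cx.X n) ((l ⋙ ModuleCat.restrictScalars φ).map (P.cx.d (n - 1) n) z) :=
      map_sub _ _ _
    have e2 : Fd.ρ.app (P.cx.X n) ((l ⋙ ModuleCat.restrictScalars φ).map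
        (P.cx.d (n - 1) n) z) = Fd.ρ.app (P.cx.X n) x' :=
      h2.trans ((congrArg (fun v => P.cx.d (n - 1) n v) hrz).trans hy)
    exact e1.trans (sub_eq_zero.mpr e2.symm)
  let a : (Fd.F.obj (P.cx.X n) : Type u) := Fd.ν'.app (P.cx.X n) x''
  have hC : Fd.ν.app (P.cx.X n) a = x'' := by
    have h2 := ConcreteCategory.congr_hom (Fd.proj_eq (P.cx.X n)) x''
    simp only [ModuleCat.comp_apply, Function.comp_apply] at h2
    refine h2.trans ?_
    rw [mc_sub_apply]
    have h3 : (Fd.ρ.app (P.cx.X n) ≫ adjl.unit.app (P.cx.X n)) x''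
        = adjl.unit.app (P.cx.X n) (Fd.ρ.app (P.cx.X n) x'') := rfl
    rw [h3, hB, map_zero]
    show x'' - 0 = x''
    rw [sub_zero]
  have hνinj : ∀ (w : (Fd.F.obj (P.cx.X (n + 1)) : Type u)),
      Fd.ν.app (P.cx.X (n + 1)) w = 0 → w = 0 := by
    intro w hw
    have h2 := ConcreteCategory.congr_hom (Fd.retract (P.cx.X (n + 1))) w
    simp only [ModuleCat.comp_apply, Function.comp_apply, ModuleCat.id_apply] at h2
    rw [← h2, hw, map_zero]
  have hD : Fd.F.map (P.cx.d n (n + 1)) a = 0 := by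
    apply hνinj
    have h2 := ConcreteCategory.congr_hom (Fd.ν.naturality (P.cx.d n (n + 1))) a
    simp only [ModuleCat.comp_apply, Function.comp_apply] at h2
    rw [h2]
    exact (congrArg (fun v => (l ⋙ ModuleCat.restrictScalars φ).map (P.cx.d n (n + 1)) v) hC).trans hA
  obtain ⟨b, hb⟩ := (exactAt_iff_elem _ n).mp (h1 n) a hD
  have hb' : Fd.F.map (P.cx.d (n - 1) n) b = a := hb
  refine ⟨Fd.ν.app (P.cx.X (n - 1)) b + z, ?_⟩
  have h2 := ConcreteCategory.congr_hom (Fd.ν.naturality (P.cx.d (n - 1) n))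
    (show (Fd.F.obj (P.cx.X (n - 1)) : Type u) from b)
  simp only [ModuleCat.comp_apply, Function.comp_apply] at h2
  have hbn : (l ⋙ ModuleCat.restrictScalars φ).map (P.cx.d (n - 1) n)
      (Fd.ν.app (P.cx.X (n - 1)) b) = x'' :=
    h2.symm.trans ((congrArg (fun v => Fd.ν.app (P.cx.X n) v) hb').trans hC)
  show (l ⋙ ModuleCat.restrictScalars φ).map (P.cx.d (n - 1) n)
      (Fd.ν.app (P.cx.X (n - 1)) b + z) = x'
  rw [map_add, hbn]
  show x' - (l ⋙ ModuleCat.restrictScalars φ).map (P.cx.d (n - 1) n) z +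
    (l ⋙ ModuleCat.restrictScalars φ).map (P.cx.d (n - 1) n) z = x'
  abel

/-- free module as a coproduct of copies. -/
def finsuppIsoCoprod {R : Type u} [Ring R] (S : Type u) (N : Type u) [AddCommGroup N]
    [Module R N] : ModuleCat.of R (S →₀ N) ≅ ∐ (fun _ : S => ModuleCat.of R N) := by
  classical
  exact (finsuppLEquivDirectSum R N S).toModuleIso ≪≫ (ModuleCat.coprodIsoDirectSum (fun _ : S => ModuleCat.of R N)).symm

theorem inAdd_finsupp {R : Type u} [Ring R] (S : Type u) (N : Type u) [AddCommGroup N]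
    [Module R N] : InAdd (ModuleCat.of R N) (ModuleCat.of R (S →₀ N)) := by
  refine ⟨S, colimit.cocone _, colimit.isColimit _,
    (finsuppIsoCoprod S N).hom, (finsuppIsoCoprod S N).inv, (finsuppIsoCoprod S N).hom_inv_id⟩

theorem inAdd_restrict {T R : Type u} [Ring T] [Ring R] (ψ : T →+* R) (X : ModuleCat.{u} R)
    (hX : Projective X) :
    InAdd ((ModuleCat.restrictScalars ψ).obj (ModuleCat.of R R))
      ((ModuleCat.restrictScalars ψ).obj X) := by
  classical
  haveI := (ModuleCat.restrictCoextendScalarsAdj.{u} ψ).leftAdjoint_preservesColimits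
  let ε : ModuleCat.of R (↑X →₀ R) ⟶ X := ModuleCat.ofHom (Finsupp.linearCombination R _root_.id)
  haveI : Epi ε := (ModuleCat.epi_iff_surjective _).mpr
    (Finsupp.linearCombination_id_surjective R ↑X)
  haveI := hX
  let σ : X ⟶ ModuleCat.of R (↑X →₀ R) := Projective.factorThru (𝟙 X) ε
  have hσ : σ ≫ ε = 𝟙 X := Projective.factorThru_comp _ _
  let isoq : (ModuleCat.restrictScalars ψ).obj (ModuleCat.of R (↑X →₀ R)) ≅
      ∐ (fun _ : ↑X => (ModuleCat.restrictScalars ψ).obj (ModuleCat.of R R)) :=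
    (ModuleCat.restrictScalars ψ).mapIso (finsuppIsoCoprod ↑X R) ≪≫ PreservesCoproduct.iso _ _
  refine ⟨↑X, colimit.cocone _, colimit.isColimit _,
    (ModuleCat.restrictScalars ψ).map σ ≫ isoq.hom,
    isoq.inv ≫ (ModuleCat.restrictScalars ψ).map ε, ?_⟩
  rw [Category.assoc, Iso.hom_inv_id_assoc, ← Functor.map_comp, hσ, CategoryTheory.Functor.map_id]


variable {R M T : Type u} [Ring R] [AddCommGroup M] [Module R M] [Module Rᵐᵒᵖ M]
  {θ : M → M → M} [Ring T] {φ : R →+* T} {μ : M →+ T}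

/-- The additive equivalence `R × M ≃+ T`. -/
def thetaAddEquiv (hT : IsThetaExt R M θ T φ μ) : R × M ≃+ T :=
  AddEquiv.mk' (Equiv.ofBijective _ hT.bijective) (by
    intro p q
    show φ (p.1 + q.1) + μ (p.2 + q.2) = (φ p.1 + μ p.2) + (φ q.1 + μ q.2)
    rw [map_add, map_add]; abel)

theorem thetaAddEquiv_apply (hT : IsThetaExt R M θ T φ μ) (r : R) (m : M) :
    thetaAddEquiv hT (r, m) = φ r + μ m := rfl

/-- the `M`-component projection of a θ-extension. -/
def pM (hT : IsThetaExt R M θ T φ μ) : T →+ M :=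
  (AddMonoidHom.snd R M).comp (thetaAddEquiv hT).symm.toAddMonoidHom

theorem pM_apply (hT : IsThetaExt R M θ T φ μ) (r : R) (m : M) : pM hT (φ r + μ m) = m := by
  have : φ r + μ m = thetaAddEquiv hT (r, m) := rfl
  rw [pM, AddMonoidHom.comp_apply, this]
  simp

theorem exists_decomp (hT : IsThetaExt R M θ T φ μ) (t : T) : ∃ r m, t = φ r + μ m := by
  obtain ⟨⟨r, m⟩, hp⟩ := hT.bijective.surjective t
  exact ⟨r, m, hp.symm⟩

theorem psi_apply (hT : IsThetaExt R M θ T φ μ) (ψ : T →+* R)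
    (hψφ : ψ.comp φ = RingHom.id R) (hψμ : ∀ m : M, ψ (μ m) = 0) (r : R) (m : M) :
    ψ (φ r + μ m) = r := by
  rw [map_add, hψμ, add_zero, ← RingHom.comp_apply, hψφ, RingHom.id_apply]

theorem decomp_eq (hT : IsThetaExt R M θ T φ μ) (ψ : T →+* R)
    (hψφ : ψ.comp φ = RingHom.id R) (hψμ : ∀ m : M, ψ (μ m) = 0) (t : T) :
    φ (ψ t) + μ (pM hT t) = t := by
  obtain ⟨r, m, rfl⟩ := exists_decomp hT t
  rw [psi_apply hT ψ hψφ hψμ, pM_apply hT]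

theorem pM_smul (hT : IsThetaExt R M θ T φ μ) (r : R) (t : T) :
    pM hT (φ r * t) = r • pM hT t := by
  obtain ⟨a, m, rfl⟩ := exists_decomp hT t
  rw [mul_add, ← map_mul, ← hT.smul_left, pM_apply hT, pM_apply hT]

theorem psi_smul (hT : IsThetaExt R M θ T φ μ) (ψ : T →+* R)
    (hψφ : ψ.comp φ = RingHom.id R) (hψμ : ∀ m : M, ψ (μ m) = 0) (r : R) (t : T) :
    ψ (φ r * t) = r * ψ t := by
  rw [map_mul, ← RingHom.comp_apply, hψφ, RingHom.id_apply]

/-- additive decomposition of the free `T`-module. -/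
def finsuppAddEquiv (hT : IsThetaExt R M θ T φ μ) (ψ : T →+* R)
    (hψφ : ψ.comp φ = RingHom.id R) (hψμ : ∀ m : M, ψ (μ m) = 0) (S : Type u) :
    (S →₀ T) ≃+ ((S →₀ R) × (S →₀ M)) where
  toFun g := (Finsupp.mapRange ψ (map_zero ψ) g, Finsupp.mapRange (pM hT) (map_zero _) g)
  invFun p := Finsupp.mapRange φ (map_zero φ) p.1 + Finsupp.mapRange μ (map_zero μ) p.2
  left_inv g := by
    ext q
    simp only [Finsupp.add_apply, Finsupp.mapRange_apply]
    exact decomp_eq hT ψ hψφ hψμ (g q)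
  right_inv p := by
    refine Prod.ext ?_ ?_ <;> ext q <;>
      simp only [Finsupp.mapRange_apply, Finsupp.add_apply]
    · exact psi_apply hT ψ hψφ hψμ (p.1 q) (p.2 q)
    · exact pM_apply hT (p.1 q) (p.2 q)
  map_add' g h := by
    refine Prod.ext ?_ ?_ <;> ext q <;>
      simp [Finsupp.mapRange_apply]

theorem finsuppAddEquiv_smul (hT : IsThetaExt R M θ T φ μ) (ψ : T →+* R)
    (hψφ : ψ.comp φ = RingHom.id R) (hψμ : ∀ m : M, ψ (μ m) = 0) (S : Type u)
    (r : R) (g : S →₀ T) :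
    finsuppAddEquiv hT ψ hψφ hψμ S (φ r • g) = r • finsuppAddEquiv hT ψ hψφ hψμ S g := by
  refine Prod.ext ?_ ?_ <;> ext q
  · show ψ ((φ r • g) q) = r • (Finsupp.mapRange ψ (map_zero ψ) g) q
    rw [Finsupp.smul_apply, Finsupp.mapRange_apply, smul_eq_mul, smul_eq_mul,
      psi_smul hT ψ hψφ hψμ]
  · show pM hT ((φ r • g) q) = r • (Finsupp.mapRange (pM hT) (map_zero _) g) q
    rw [Finsupp.smul_apply, Finsupp.mapRange_apply, smul_eq_mul, pM_smul hT]

/-- decomposition of the restricted free `T`-module. -/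
def restrictFinsuppEquiv (hT : IsThetaExt R M θ T φ μ) (ψ : T →+* R)
    (hψφ : ψ.comp φ = RingHom.id R) (hψμ : ∀ m : M, ψ (μ m) = 0) (S : Type u) :
    ((ModuleCat.restrictScalars φ).obj (ModuleCat.of T (S →₀ T))) ≃ₗ[R]
      ((S →₀ R) × (S →₀ M)) where
  toFun g := finsuppAddEquiv hT ψ hψφ hψμ S g
  invFun p := (finsuppAddEquiv hT ψ hψφ hψμ S).symm p
  left_inv g := (finsuppAddEquiv hT ψ hψφ hψμ S).symm_apply_apply g
  right_inv p := (finsuppAddEquiv hT ψ hψφ hψμ S).apply_symm_apply p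
  map_add' g h := map_add _ g h
  map_smul' r g := finsuppAddEquiv_smul hT ψ hψφ hψμ S r g


end
end CleftGPAux

open CleftGPAux

/-- Let `T = R ⋉_θ M` be a θ-extension inducing the cleft extension
`(Mod R, Mod T, e, i, l)` where `e` is restriction along `R → T`, `i` is restriction along
`T → R`, `l ⊣ e` (so `l ≅ T ⊗_R -`) and `q ⊣ i` (so `q ≅ R ⊗_T -`). If this cleft extension
is compatible — `F(P•) ≅ M ⊗_R P•` and `Hom_R(P•, Add M)` acyclic for every complete
`R`-projective resolution `P•`, and `q(Q•) ≅ R ⊗_T Q•` and `Hom_T(Q•, Add R)` acyclic for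
every complete `T`-projective resolution `Q•` — then both `l` and `q` preserve Gorenstein
projective modules. -/
theorem stmt_15 (R M : Type u) [Ring R] [AddCommGroup M] [Module R M] [Module Rᵐᵒᵖ M]
    [SMulCommClass R Rᵐᵒᵖ M] (θ : M → M → M)
    (T : Type u) [Ring T] (φ : R →+* T) (μ : M →+ T) (hT : IsThetaExt R M θ T φ μ)
    (ψ : T →+* R) (hψφ : ψ.comp φ = RingHom.id R) (hψμ : ∀ m : M, ψ (μ m) = 0)
    (l : ModuleCat.{u} R ⥤ ModuleCat.{u} T)
    (adjl : l ⊣ ModuleCat.restrictScalars φ)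
    (q : ModuleCat.{u} T ⥤ ModuleCat.{u} R)
    (adjq : q ⊣ ModuleCat.restrictScalars ψ) [q.Additive]
    (Fd : FData l (ModuleCat.restrictScalars φ) adjl) [Fd.F.Additive]
    (h1 : ∀ P : CompleteProjRes (ModuleCat.{u} R), MapAcyclic Fd.F P.cx)
    (h2 : ∀ (P : CompleteProjRes (ModuleCat.{u} R)) (X : ModuleCat.{u} R),
      InAdd (ModuleCat.of R M) X → HomAcyclic P.cx X)
    (h3 : ∀ Q : CompleteProjRes (ModuleCat.{u} T), MapAcyclic q Q.cx)
    (h4 : ∀ (Q : CompleteProjRes (ModuleCat.{u} T)) (X : ModuleCat.{u} T),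
      InAdd ((ModuleCat.restrictScalars ψ).obj (ModuleCat.of R R)) X → HomAcyclic Q.cx X) :
    (∀ X : ModuleCat.{u} R, IsGProj X → IsGProj (l.obj X)) ∧
      (∀ Y : ModuleCat.{u} T, IsGProj Y → IsGProj (q.obj Y)) := by
  haveI : l.IsLeftAdjoint := ⟨_, ⟨adjl⟩⟩
  haveI hlc : PreservesColimitsOfSize.{0,0} l := adjl.leftAdjoint_preservesColimits
  haveI : PreservesBinaryBiproducts l := preservesBinaryBiproducts_of_preservesBinaryCoproducts l
  haveI : l.Additive := Functor.additive_of_preservesBinaryBiproducts l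
  haveI hqc : PreservesColimitsOfSize.{0,0} q := adjq.leftAdjoint_preservesColimits
  haveI : (ModuleCat.restrictScalars φ).PreservesEpimorphisms := by
    constructor
    intro X Y f hf
    rw [ModuleCat.epi_iff_surjective] at hf ⊢
    exact hf
  haveI : (ModuleCat.restrictScalars ψ).PreservesEpimorphisms := by
    constructor
    intro X Y f hf
    rw [ModuleCat.epi_iff_surjective] at hf ⊢
    exact hf
  constructor
  · rintro X ⟨P, ⟨hX⟩⟩
    refine isGProj_map_of l P (lmap_exactAt φ l adjl Fd P (h1 P)) ?_ ?_ X hX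
    · intro n
      exact adjl.map_projective _ (P.proj n)
    · intro Qp hQp
      apply homAcyclic_of_adj adjl
      -- decompose the restricted projective module
      haveI := hQp
      let Qc : Type u := ↑Qp
      let ε : ModuleCat.of T (Qc →₀ T) ⟶ Qp := ModuleCat.ofHom (Finsupp.linearCombination T _root_.id)
      haveI : Epi ε := (ModuleCat.epi_iff_surjective _).mpr
        (Finsupp.linearCombination_id_surjective T Qc)
      let σ : Qp ⟶ ModuleCat.of T (Qc →₀ T) := Projective.factorThru (𝟙 Qp) ε
      have hσ : σ ≫ ε = 𝟙 Qp := Projective.factorThru_comp _ _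
      let iso1 : (ModuleCat.restrictScalars φ).obj (ModuleCat.of T (Qc →₀ T)) ≅
          ModuleCat.of R ((Qc →₀ R) × (Qc →₀ M)) :=
        (restrictFinsuppEquiv hT ψ hψφ hψμ Qc).toModuleIso
      let bb : (ModuleCat.of R (Qc →₀ R)) ⊞ (ModuleCat.of R (Qc →₀ M)) ≅
          ModuleCat.of R ((Qc →₀ R) × (Qc →₀ M)) :=
        ModuleCat.biprodIsoProd _ _
      have hR : HomAcyclic P.cx (ModuleCat.of R (Qc →₀ R)) :=
        P.homAcyclic _ (ModuleCat.projective_of_free Finsupp.basisSingleOne)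
      have hM : HomAcyclic P.cx (ModuleCat.of R (Qc →₀ M)) :=
        h2 P _ (inAdd_finsupp Qc M)
      refine homAcyclic_of_retract P.cx
        ((ModuleCat.restrictScalars φ).map σ ≫ iso1.hom ≫ bb.inv)
        (bb.hom ≫ iso1.inv ≫ (ModuleCat.restrictScalars φ).map ε)
        ?_ (homAcyclic_biprod P.cx hR hM)
      rw [Category.assoc, Category.assoc, Iso.inv_hom_id_assoc, Iso.hom_inv_id_assoc,
        ← Functor.map_comp, hσ, CategoryTheory.Functor.map_id]
  · rintro Y ⟨Q, ⟨hY⟩⟩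
    refine isGProj_map_of q Q (h3 Q) ?_ ?_ Y hY
    · intro n
      exact adjq.map_projective _ (Q.proj n)
    · intro Z hZ
      apply homAcyclic_of_adj adjq
      exact h4 Q _ (inAdd_restrict ψ Z hZ)
end
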